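/- arXiv:2306.10344 — 5 statements merged into one kernel-verified Lean document; each statement's English description precedes it below -/
import Mathlib

section
/- For every integer k ≥ 2 and every a ∈ ℕ, the maximum m such that [a, m-1] ∈ kS₁ equals 2^k · a. Equivalently: [a, 2^k·a - 1] ∈ kS₁ but [a, 2^k·a] ∉ kS₁. -/
open Finset

/-- `F < G` for finite sets: every element of `F` is below every element of `G`. -/
def FinsetLT (F G : Finset ℕ) : Prop := ∀ x ∈ F, ∀ y ∈ G, x < y

/-- Membership in the Schreier family `S₁`: a finite set of positive integers
with `|F| ≤ min F` (the empty set belongs trivially). -/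
def IsSchreier (F : Finset ℕ) : Prop := ∀ n ∈ F, 0 < n ∧ F.card ≤ n

/-- `F` is a union of at most `d` sets `F₁ < F₂ < ⋯`, each in the family `P`. -/
def Combine (P : Finset ℕ → Prop) (d : ℕ) (F : Finset ℕ) : Prop :=
  ∃ L : List (Finset ℕ), L.length ≤ d ∧ L.Pairwise FinsetLT ∧
    (∀ G ∈ L, P G) ∧ L.foldr (· ∪ ·) ∅ = F

/-- Membership in `S₂`. -/
def MemS2 (F : Finset ℕ) : Prop :=
  F = ∅ ∨ ∃ h : F.Nonempty, Combine IsSchreier (F.min' h) F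

/-- Membership in `S₃`. -/
def MemS3 (F : Finset ℕ) : Prop :=
  F = ∅ ∨ ∃ h : F.Nonempty, Combine MemS2 (F.min' h) F

/-- `F` is a maximal member of the family `P` (among sets of positive integers). -/
def IsFull (P : Finset ℕ → Prop) (F : Finset ℕ) : Prop :=
  P F ∧ ∀ n : ℕ, 0 < n → n ∉ F → ¬ P (insert n F)

/-- `F ∈ full_{a,b}(P)`. -/
def FullAB (P : Finset ℕ → Prop) (a b : ℕ) (F : Finset ℕ) : Prop :=
  P F ∧ F ⊆ Finset.Icc a b ∧ a ∈ F ∧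
    ∀ n ∈ Finset.Icc a b, n ∉ F → ¬ P (insert n F)

/-- The tower function `τ`. -/
def tau : ℕ → ℕ → ℕ
  | 0, a => a
  | i + 1, a => 2 ^ tau i a

/-- `E₁(F)`: `F` itself if `|F| ≤ min F`, otherwise the `min F` smallest elements of `F`. -/
def E1 (F : Finset ℕ) : Finset ℕ :=
  if h : F.Nonempty then ((F.sort (· ≤ ·)).take (F.min' h)).toFinset else ∅

/-- Union of the first `i` greedy pieces. -/
def Eacc : ℕ → Finset ℕ → Finset ℕ
  | 0, _ => ∅
  | i + 1, F => Eacc i F ∪ E1 (F \ Eacc i F)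

/-- The `i`-th greedy piece `E_i(F)` (for `i ≥ 1`). -/
def Epiece (i : ℕ) (F : Finset ℕ) : Finset ℕ := E1 (F \ Eacc (i - 1) F)

open Classical in
/-- `E₁*(F)`: `F` itself if `F ∈ S₂`, otherwise `E₁(F) ∪ ⋯ ∪ E_{min F}(F)`. -/
noncomputable def E1star (F : Finset ℕ) : Finset ℕ :=
  if MemS2 F then F
  else if h : F.Nonempty then Eacc (F.min' h) F else ∅

/-- Union of the first `i` starred greedy pieces. -/
noncomputable def EaccStar : ℕ → Finset ℕ → Finset ℕ
  | 0, _ => ∅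
  | i + 1, F => EaccStar i F ∪ E1star (F \ EaccStar i F)

/-- The `i`-th starred greedy piece `E_i*(F)` (for `i ≥ 1`). -/
noncomputable def EpieceStar (i : ℕ) (F : Finset ℕ) : Finset ℕ :=
  E1star (F \ EaccStar (i - 1) F)

/-!
The greedy decomposition `[a, 2a-1] ∪ [2a, 4a-1] ∪ ⋯` shows `[a, 2^k a - 1] ∈ kS₁`, since
an interval starting at `a` is Schreier exactly when it has at most `a` elements. Conversely,
if `[a, b]` is covered by Schreier sets `F₁ < F₂ < ⋯ < F_k`, the part of `[a, b]` lying in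
`F₁` is an initial segment `[a, m]` of at most `a` elements, so `m + 1 ≤ 2a` and `[m + 1, b]`
is covered by the remaining `k - 1` sets; by induction `b < 2^(k-1) (m + 1) ≤ 2^k a`.
-/

lemma mem_foldr_union {L : List (Finset ℕ)} {x : ℕ} :
    x ∈ L.foldr (· ∪ ·) ∅ ↔ ∃ G ∈ L, x ∈ G := by
  induction L with
  | nil => simp
  | cons G T ih => simp [ih]

lemma combine_empty (P : Finset ℕ → Prop) (d : ℕ) : Combine P d ∅ :=
  ⟨[], by simp, by simp, by simp, rfl⟩

lemma Combine.union_of_lt {P : Finset ℕ → Prop} {d : ℕ} {G F : Finset ℕ} (hG : P G)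
    (hGF : FinsetLT G F) (hF : Combine P d F) : Combine P (d + 1) (G ∪ F) := by
  obtain ⟨L, hlen, hpw, hP, rfl⟩ := hF
  refine ⟨G :: L, by simpa using hlen, List.pairwise_cons.mpr ⟨?_, hpw⟩, ?_, rfl⟩
  · exact fun H hH x hx y hy => hGF x hx y (mem_foldr_union.mpr ⟨H, hH, hy⟩)
  · simpa [List.forall_mem_cons] using ⟨hG, hP⟩

lemma isSchreier_Icc_two_mul_sub_one {a : ℕ} (ha : 0 < a) : IsSchreier (Icc a (2 * a - 1)) := by
  intro n hn
  rw [mem_Icc] at hn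
  rw [Nat.card_Icc]
  omega

lemma combine_isSchreier_Icc_pow_mul (k : ℕ) {a : ℕ} (ha : 0 < a) :
    Combine IsSchreier k (Icc a (2 ^ k * a - 1)) := by
  induction k generalizing a with
  | zero => simpa [Icc_eq_empty_of_lt, ha] using combine_empty IsSchreier 0
  | succ k ih =>
    have hsplit : Icc a (2 ^ (k + 1) * a - 1) =
        Icc a (2 * a - 1) ∪ Icc (2 * a) (2 ^ k * (2 * a) - 1) := by
      have : 2 * a ≤ 2 ^ k * (2 * a) := Nat.le_mul_of_pos_left _ (Nat.two_pow_pos k)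
      ext x
      simp only [mem_union, mem_Icc, pow_succ, mul_assoc, mul_comm 2 a] at *
      omega
    rw [hsplit]
    refine (ih (by omega)).union_of_lt (isSchreier_Icc_two_mul_sub_one ha) ?_
    intro x hx y hy
    rw [mem_Icc] at hx hy
    omega

lemma exists_Icc_subset_and_Icc_subset_foldr {G : Finset ℕ} {T : List (Finset ℕ)}
    (hGT : ∀ H ∈ T, FinsetLT G H) {a b : ℕ}
    (hcover : Icc a b ⊆ G ∪ T.foldr (· ∪ ·) ∅)
    (hmeet : (Icc a b ∩ G).Nonempty) :
    ∃ m, a ≤ m ∧ Icc a m ⊆ G ∧ Icc (m + 1) b ⊆ T.foldr (· ∪ ·) ∅ := by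
  have hcover' : ∀ x ∈ Icc a b, x ∈ G ∨ ∃ H ∈ T, x ∈ H := fun x hx =>
    mem_union.mp (hcover hx) |>.imp_right mem_foldr_union.mp
  set m := (Icc a b ∩ G).max' hmeet
  obtain ⟨hmab, hmG⟩ := mem_inter.mp ((Icc a b ∩ G).max'_mem hmeet)
  rw [mem_Icc] at hmab
  refine ⟨m, hmab.1, fun x hx => ?_, fun x hx => ?_⟩ <;> rw [mem_Icc] at hx
  · -- the later sets lie entirely above `m ∈ G`
    rcases hcover' x (mem_Icc.mpr ⟨hx.1, hx.2.trans hmab.2⟩) with hxG | ⟨H, hH, hxH⟩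
    · exact hxG
    · exact absurd (hGT H hH m hmG x hxH) (by omega)
  · rcases hcover' x (mem_Icc.mpr ⟨by omega, hx.2⟩) with hxG | hxT
    · have hxm :=
        (Icc a b ∩ G).le_max' x (mem_inter.mpr ⟨mem_Icc.mpr ⟨by omega, hx.2⟩, hxG⟩)
      omega
    · exact mem_foldr_union.mpr hxT

lemma lt_pow_mul_of_Icc_subset_foldr {L : List (Finset ℕ)} (hpw : L.Pairwise FinsetLT)
    (hS : ∀ G ∈ L, IsSchreier G) {a b : ℕ} (hcover : Icc a b ⊆ L.foldr (· ∪ ·) ∅) :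
    b < 2 ^ L.length * a := by
  induction L generalizing a with
  | nil =>
    rw [List.length_nil, pow_zero, one_mul]
    by_contra! hab
    simpa using hcover (mem_Icc.mpr ⟨le_refl a, hab⟩)
  | cons G T ih =>
    obtain ⟨hGT, hpwT⟩ := List.pairwise_cons.mp hpw
    have hST : ∀ H ∈ T, IsSchreier H := fun H hH => hS H (List.mem_cons_of_mem G hH)
    by_cases hmeet : (Icc a b ∩ G).Nonempty
    · obtain ⟨m, ham, hinit, htail⟩ :=
        exists_Icc_subset_and_Icc_subset_foldr hGT hcover hmeet
      have hm : m + 1 ≤ 2 * a := by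
        have haG : a ∈ G := hinit (mem_Icc.mpr ⟨le_rfl, ham⟩)
        have hcard := (card_le_card hinit).trans (hS G List.mem_cons_self a haG).2
        rw [Nat.card_Icc] at hcard
        omega
      calc b < 2 ^ T.length * (m + 1) := ih hpwT hST htail
        _ ≤ 2 ^ T.length * (2 * a) := Nat.mul_le_mul_left _ hm
        _ = 2 ^ (G :: T).length * a := by simp [pow_succ, mul_assoc, mul_comm 2 a]
    · have htail : Icc a b ⊆ T.foldr (· ∪ ·) ∅ := fun x hx =>
        (mem_union.mp (hcover hx)).resolve_left
          fun hxG => hmeet ⟨x, mem_inter.mpr ⟨hx, hxG⟩⟩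
      calc b < 2 ^ T.length * a := ih hpwT hST htail
        _ ≤ 2 ^ (G :: T).length * a := by gcongr <;> simp

lemma lt_pow_mul_of_combine_isSchreier_Icc {k a b : ℕ}
    (h : Combine IsSchreier k (Icc a b)) : b < 2 ^ k * a := by
  obtain ⟨L, hlen, hpw, hS, hU⟩ := h
  calc b < 2 ^ L.length * a := lt_pow_mul_of_Icc_subset_foldr hpw hS hU.ge
    _ ≤ 2 ^ k * a := by gcongr; norm_num

theorem stmt1_general (k : ℕ) (a : ℕ) (ha : 0 < a) :
    Combine IsSchreier k (Finset.Icc a (2 ^ k * a - 1)) ∧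
    ¬ Combine IsSchreier k (Finset.Icc a (2 ^ k * a)) :=
  ⟨combine_isSchreier_Icc_pow_mul k ha, fun h => (lt_pow_mul_of_combine_isSchreier_Icc h).false⟩

theorem stmt1 (k : ℕ) (hk : 2 ≤ k) (a : ℕ) (ha : 0 < a) :
    Combine IsSchreier k (Finset.Icc a (2 ^ k * a - 1)) ∧
    ¬ Combine IsSchreier k (Finset.Icc a (2 ^ k * a)) :=
  stmt1_general k a ha
end

section
/- For every a ∈ ℕ, the maximum m such that [a, m-1] ∈ S₂ equals 2^a · a. Equivalently: [a, 2^a·a - 1] ∈ S₂ but [a, 2^a·a] ∉ S₂. -/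
open Finset

lemma isSchreier_Ico_two_mul (a : ℕ) : IsSchreier (Ico a (2 * a)) := by
  intro n hn
  rw [mem_Ico] at hn
  rw [Nat.card_Ico]
  omega

lemma IsSchreier.le_two_mul_of_Ico_subset {G : Finset ℕ} (hG : IsSchreier G) {a x : ℕ}
    (hsub : Ico a x ⊆ G) : x ≤ 2 * a := by
  by_contra! hx
  have hcard : (Ico a x).card ≤ G.card := card_le_card hsub
  have haG : G.card ≤ a := (hG a (hsub (mem_Ico.2 ⟨le_rfl, by omega⟩))).2
  rw [Nat.card_Ico] at hcard
  omega

lemma exists_Ico_subset_notMem (G : Finset ℕ) (a : ℕ) :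
    ∃ x, a ≤ x ∧ x ∉ G ∧ Ico a x ⊆ G := by
  classical
  have hex : ∃ k, a + k ∉ G := by
    obtain ⟨k, hk⟩ := Infinite.exists_notMem_finset (G.image (· - a))
    exact ⟨k, fun h => hk (mem_image.2 ⟨a + k, h, by simp⟩)⟩
  refine ⟨a + Nat.find hex, by omega, Nat.find_spec hex, fun y hy => ?_⟩
  rw [mem_Ico] at hy
  have := Nat.find_min hex (m := y - a) (by omega)
  rwa [not_not, Nat.add_sub_cancel' hy.1] at this

lemma combine_isSchreier_Ico (n a : ℕ) : Combine IsSchreier n (Ico a (2 ^ n * a)) := by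
  induction n generalizing a with
  | zero => exact ⟨[], le_rfl, .nil, by simp, by simp⟩
  | succ n ih =>
    obtain ⟨L, hlen, hchain, hschreier, hunion⟩ := ih (2 * a)
    have hmem {y : ℕ} (hy : ∃ G ∈ L, y ∈ G) : y ∈ Ico (2 * a) (2 ^ n * (2 * a)) :=
      hunion ▸ mem_foldr_union.2 hy
    refine ⟨Ico a (2 * a) :: L, by simpa using hlen, ?_, ?_, ?_⟩
    · refine List.Pairwise.cons (fun G hG x hx y hy => ?_) hchain
      have := mem_Ico.1 (hmem ⟨G, hG, hy⟩)
      have := mem_Ico.1 hx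
      omega
    · simpa [isSchreier_Ico_two_mul] using hschreier
    · have hle : 2 * a ≤ 2 ^ n * (2 * a) := Nat.le_mul_of_pos_left _ (Nat.two_pow_pos n)
      rw [List.foldr_cons, hunion, Ico_union_Ico_eq_Ico (by omega) hle, pow_succ, mul_assoc,
        mul_comm 2 a]

lemma le_two_pow_mul_of_Ico_subset_foldr (L : List (Finset ℕ)) (hchain : L.Pairwise FinsetLT)
    (hschreier : ∀ G ∈ L, IsSchreier G) {a b : ℕ} (hsub : Ico a b ⊆ L.foldr (· ∪ ·) ∅) :
    b ≤ 2 ^ L.length * a := by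
  induction L generalizing a b with
  | nil => simpa using (Ico_eq_empty_iff.1 (subset_empty.1 hsub))
  | cons G L ih =>
    rw [List.pairwise_cons] at hchain
    have hschreierG := hschreier G List.mem_cons_self
    obtain ⟨x, hax, hxG, hIcoG⟩ := exists_Ico_subset_notMem G a
    have hx : x ≤ 2 * a := hschreierG.le_two_mul_of_Ico_subset hIcoG
    have hpow : 2 * a ≤ 2 ^ (L.length + 1) * a :=
      Nat.mul_le_mul_right a (Nat.le_self_pow L.length.succ_ne_zero 2)
    by_cases hxb : b ≤ x
    · simpa using hxb.trans (hx.trans hpow)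
    have hxL : x ∈ L.foldr (· ∪ ·) ∅ := by
      have := hsub (mem_Ico.2 ⟨hax, by omega⟩)
      rwa [List.foldr_cons, mem_union, or_iff_right hxG] at this
    have hGx : ∀ y ∈ G, y < x := by
      obtain ⟨G', hG', hxG'⟩ := mem_foldr_union.1 hxL
      exact fun y hy => hchain.1 G' hG' y hy x hxG'
    have hrest : Ico x b ⊆ L.foldr (· ∪ ·) ∅ := fun y hy => by
      have := hsub (Ico_subset_Ico_left hax hy)
      rw [List.foldr_cons, mem_union] at this
      exact this.resolve_left fun hyG => by have := mem_Ico.1 hy; have := hGx y hyG; omega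
    calc b ≤ 2 ^ L.length * x :=
          ih hchain.2 (fun G' hG' => hschreier G' (List.mem_cons_of_mem _ hG')) hrest
      _ ≤ 2 ^ L.length * (2 * a) := Nat.mul_le_mul_left _ hx
      _ = 2 ^ (G :: L).length * a := by rw [List.length_cons, pow_succ]; ring

lemma le_two_pow_mul_of_combine_isSchreier_Ico {n a b : ℕ}
    (h : Combine IsSchreier n (Ico a b)) : b ≤ 2 ^ n * a := by
  obtain ⟨L, hlen, hchain, hschreier, hunion⟩ := h
  calc b ≤ 2 ^ L.length * a :=
        le_two_pow_mul_of_Ico_subset_foldr L hchain hschreier hunion.ge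
    _ ≤ 2 ^ n * a := Nat.mul_le_mul_right _ (Nat.pow_le_pow_right two_pos hlen)

lemma memS2_Icc_iff {a b : ℕ} (hab : a ≤ b) :
    MemS2 (Icc a b) ↔ Combine IsSchreier a (Icc a b) := by
  have hne : (Icc a b).Nonempty := nonempty_Icc.2 hab
  have hmin : (Icc a b).min' hne = a :=
    le_antisymm (min'_le _ _ (left_mem_Icc.2 hab)) (mem_Icc.1 (min'_mem _ hne)).1
  simp only [MemS2, hne.ne_empty, false_or, hmin, exists_prop, and_iff_right hne]

theorem stmt2 (a : ℕ) (ha : 0 < a) :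
    MemS2 (Finset.Icc a (2 ^ a * a - 1)) ∧
    ¬ MemS2 (Finset.Icc a (2 ^ a * a)) := by
  have h2a : 2 * a ≤ 2 ^ a * a := Nat.mul_le_mul_right a (Nat.le_self_pow ha.ne' 2)
  constructor
  · rw [memS2_Icc_iff (by omega)]
    have hIcc : Icc a (2 ^ a * a - 1) = Ico a (2 ^ a * a) := by
      ext x; simp only [mem_Icc, mem_Ico]; omega
    rw [hIcc]
    exact combine_isSchreier_Ico a a
  · rw [memS2_Icc_iff (by omega), ← Ico_add_one_right_eq_Icc]
    intro h
    have := le_two_pow_mul_of_combine_isSchreier_Ico h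
    omega
end

section
/- Let φ: ℕ → ℕ be an increasing superadditive function and let a, b ∈ ℕ with [a,b] ∉ S_φ. If F ∈ full_{a,b}(S_φ), then F is a maximal member of S_φ in all of ℕ, i.e., F ∈ full(S_φ). In particular full_{a,b}(S_φ) = [a,b]full(S_φ). -/
open Finset

theorem stmt7 (φ : ℕ → ℕ) (hsup : ∀ m n, φ m + φ n ≤ φ (m + n))
    (hmono : ∀ m n, m ≤ n → φ m ≤ φ n) (a b : ℕ)
    (Sφ : Finset ℕ → Prop)
    (hSφ : ∀ F, Sφ F ↔ (∀ n ∈ F, 0 < n) ∧ ∀ h : F.Nonempty, F.card ≤ φ (F.min' h))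
    (hab : ¬ Sφ (Finset.Icc a b)) :
    (∀ F : Finset ℕ, FullAB Sφ a b F → IsFull Sφ F) ∧
    (∀ F : Finset ℕ, FullAB Sφ a b F ↔ (IsFull Sφ F ∧ F ⊆ Finset.Icc a b ∧ a ∈ F)) := by
  have key : ∀ F : Finset ℕ, FullAB Sφ a b F → IsFull Sφ F := by
    intro F hF
    obtain ⟨hFS, hFsub, haF, hmax⟩ := hF
    obtain ⟨hpos, hcard⟩ := (hSφ F).1 hFS
    have hne : F.Nonempty := ⟨a, haF⟩
    have ha0 : 0 < a := hpos a haF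
    have hge : ∀ x ∈ F, a ≤ x := fun x hx => (Finset.mem_Icc.1 (hFsub hx)).1
    have hmin : F.min' hne = a :=
      le_antisymm (Finset.min'_le F a haF) (Finset.le_min' _ _ _ hge)
    have hab' : a ≤ b := (Finset.mem_Icc.1 (hFsub haF)).2
    have haI : a ∈ Finset.Icc a b := Finset.mem_Icc.2 ⟨le_refl a, hab'⟩
    have hIne : (Finset.Icc a b).Nonempty := ⟨a, haI⟩
    have hImin : (Finset.Icc a b).min' hIne = a :=
      le_antisymm (Finset.min'_le _ a haI)
        (Finset.le_min' _ _ _ fun y hy => (Finset.mem_Icc.1 hy).1)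
    have hIcard : φ a < (Finset.Icc a b).card := by
      by_contra h
      push_neg at h
      apply hab
      rw [hSφ]
      refine ⟨fun n hn => lt_of_lt_of_le ha0 (Finset.mem_Icc.1 hn).1, fun h' => ?_⟩
      rw [show (Finset.Icc a b).min' h' = a from hImin]
      exact h
    have hle : F.card ≤ φ a := by have := hcard hne; rwa [hmin] at this
    have hcardF : F.card = φ a := by
      rcases lt_or_eq_of_le hle with hlt | heq
      · exfalso
        obtain ⟨n, hnI, hnF⟩ := Finset.not_subset.1 fun hsub' =>
          absurd (Finset.card_le_card hsub') (not_le.2 (lt_trans hlt hIcard))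
        apply hmax n hnI hnF
        rw [hSφ]
        constructor
        · intro m hm
          rcases Finset.mem_insert.1 hm with rfl | hm
          · exact lt_of_lt_of_le ha0 (Finset.mem_Icc.1 hnI).1
          · exact hpos m hm
        · intro h'
          have hmin' : (insert n F).min' h' = a := by
            apply le_antisymm (Finset.min'_le _ a (Finset.mem_insert_of_mem haF))
            apply Finset.le_min'
            intro y hy
            rcases Finset.mem_insert.1 hy with rfl | hy
            · exact (Finset.mem_Icc.1 hnI).1
            · exact hge y hy
          rw [hmin', Finset.card_insert_of_notMem hnF]
          omega
      · exact heq
    refine ⟨hFS, fun n hn0 hnF hSn => ?_⟩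
    obtain ⟨_, hcard'⟩ := (hSφ _).1 hSn
    have h1 : (insert n F).card = φ a + 1 := by
      rw [Finset.card_insert_of_notMem hnF, hcardF]
    have h2 := hcard' ⟨n, Finset.mem_insert_self n F⟩
    have h3 : (insert n F).min' ⟨n, Finset.mem_insert_self n F⟩ ≤ a :=
      Finset.min'_le _ a (Finset.mem_insert_of_mem haF)
    have h4 := hmono _ _ h3
    omega
  refine ⟨key, fun F => ⟨fun hF => ⟨key F hF, hF.2.1, hF.2.2.1⟩, ?_⟩⟩
  rintro ⟨hfull, hsub, haF⟩
  refine ⟨hfull.1, hsub, haF, fun n hnI hnF => ?_⟩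
  have ha0 : 0 < a := ((hSφ F).1 hfull.1).1 a haF
  exact hfull.2 n (lt_of_lt_of_le ha0 (Finset.mem_Icc.1 hnI).1) hnF
end

section
/- Let F be a finite set of positive integers and k ∈ ℕ. With the greedy decomposition operators E_i as defined, F ∈ kS₁ if and only if E_{k+1}(F) = ∅. -/
open Finset

/-!
`E₁(F)` is an initial segment of `F` with `min (min F) |F|` elements, and it contains every
initial segment of `F` that lies in `S₁`: a larger one would have more than `min F` elements.
Hence the first piece of any decomposition `F₁ < ⋯ < F_{k+1}` of `F` into `S₁`-sets is
contained in `E₁(F)`, and since `kS₁` is hereditary, `F ∈ (k+1)S₁` iff `F \ E₁(F) ∈ kS₁`.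
Iterating, `F ∈ kS₁` iff `F` is exhausted by its first `k` greedy pieces, i.e. iff
`E_{k+1}(F) = E₁(F \ (E₁(F) ∪ ⋯ ∪ E_k(F))) = ∅`.
-/

lemma List.Pairwise.rel_of_mem_take_of_notMem_take {α : Type*} {R : α → α → Prop} {l : List α}
    (hl : l.Pairwise R) {n : ℕ} {x y : α} (hx : x ∈ l.take n) (hy : y ∈ l) (hy' : y ∉ l.take n) :
    R x y := by
  rw [← List.take_append_drop n l] at hl hy
  exact (List.pairwise_append.mp hl).2.2 x hx y ((List.mem_append.mp hy).resolve_left hy')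

lemma FinsetLT.disjoint {G H : Finset ℕ} (h : FinsetLT G H) : Disjoint G H :=
  disjoint_left.mpr fun x hxG hxH => (h x hxG x hxH).false

lemma finsetLT_foldr_union {G : Finset ℕ} {L : List (Finset ℕ)} (h : ∀ H ∈ L, FinsetLT G H) :
    FinsetLT G (L.foldr (· ∪ ·) ∅) := fun x hx y hy =>
  let ⟨H, hH, hyH⟩ := mem_foldr_union.mp hy
  h H hH x hx y hyH

lemma isSchreier_antitone : Antitone IsSchreier :=
  fun _ _ hGH hH n hn => ⟨(hH n (hGH hn)).1, (card_le_card hGH).trans (hH n (hGH hn)).2⟩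

section Combine

variable {P : Finset ℕ → Prop} {k : ℕ} {F : Finset ℕ}

lemma combine_empty_s11 : Combine P k ∅ :=
  ⟨[], Nat.zero_le k, List.Pairwise.nil, by simp, rfl⟩

lemma combine_zero_iff : Combine P 0 F ↔ F = ∅ := by
  constructor
  · rintro ⟨L, hlen, -, -, rfl⟩
    rw [List.eq_nil_of_length_eq_zero (Nat.le_zero.mp hlen), List.foldr_nil]
  · rintro rfl
    exact combine_empty_s11

lemma Combine.subset (hP : Antitone P) (h : Combine P k F) {G : Finset ℕ} (hGF : G ⊆ F) :
    Combine P k G := by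
  obtain ⟨L, hlen, hpw, hPL, rfl⟩ := h
  refine ⟨L.map (· ∩ G), by simpa using hlen, ?_, ?_, ?_⟩
  · exact List.pairwise_map.mpr <| hpw.imp fun hlt x hx y hy =>
      hlt x (mem_inter.mp hx).1 y (mem_inter.mp hy).1
  · simp only [List.mem_map]
    rintro _ ⟨H, hH, rfl⟩
    exact hP inter_subset_left (hPL H hH)
  · ext x
    simp only [mem_foldr_union, List.mem_map, exists_exists_and_eq_and, mem_inter]
    exact ⟨fun ⟨_, _, _, hxG⟩ => hxG, fun hxG => (mem_foldr_union.mp (hGF hxG)).imp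
      fun _ ⟨hH, hxH⟩ => ⟨hH, hxH, hxG⟩⟩

lemma combine_succ_iff (hP : P ∅) :
    Combine P (k + 1) F ↔
      ∃ G ⊆ F, P G ∧ FinsetLT G (F \ G) ∧ Combine P k (F \ G) := by
  constructor
  · rintro ⟨_ | ⟨G, L⟩, hlen, hpw, hPL, rfl⟩
    · exact ⟨∅, empty_subset _, hP, by simp [FinsetLT], combine_empty_s11⟩
    obtain ⟨hGL, hpwL⟩ := List.pairwise_cons.mp hpw
    have hlt := finsetLT_foldr_union hGL
    refine ⟨G, subset_union_left, hPL G List.mem_cons_self, ?_⟩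
    rw [List.foldr_cons, union_sdiff_cancel_left hlt.disjoint]
    exact ⟨hlt, L, by simpa using hlen, hpwL, fun H hH => hPL H (List.mem_cons_of_mem G hH), rfl⟩
  · rintro ⟨G, hGF, hPG, hlt, L, hlen, hpw, hPL, hL⟩
    refine ⟨G :: L, by simpa using hlen, List.pairwise_cons.mpr ⟨?_, hpw⟩, ?_, ?_⟩
    · intro H hH x hx y hy
      exact hlt x hx y (hL ▸ mem_foldr_union.mpr ⟨H, hH, hy⟩)
    · simpa [List.mem_cons] using ⟨hPG, hPL⟩
    · rw [List.foldr_cons, hL, union_sdiff_of_subset hGF]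

end Combine

lemma E1_subset (F : Finset ℕ) : E1 F ⊆ F := by
  unfold E1
  split_ifs
  · exact fun x hx => (mem_sort _).mp (List.mem_of_mem_take (List.mem_toFinset.mp hx))
  · exact empty_subset F

lemma card_E1 {F : Finset ℕ} (hF : F.Nonempty) : #(E1 F) = min (F.min' hF) #F := by
  rw [E1, dif_pos hF, List.toFinset_card_of_nodup ((F.sort_nodup _).sublist (List.take_sublist _ _)),
    List.length_take, length_sort]

lemma finsetLT_E1_sdiff (F : Finset ℕ) : FinsetLT (E1 F) (F \ E1 F) := by
  intro x hx y hy
  have hF : F.Nonempty := ⟨x, E1_subset F hx⟩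
  obtain ⟨hyF, hyE⟩ := mem_sdiff.mp hy
  rw [E1, dif_pos hF, List.mem_toFinset] at hx hyE
  exact F.sortedLT_sort.pairwise.rel_of_mem_take_of_notMem_take hx ((mem_sort _).mpr hyF) hyE

lemma isSchreier_E1 {F : Finset ℕ} (hpos : ∀ n ∈ F, 0 < n) : IsSchreier (E1 F) := fun n hn =>
  have hnF := E1_subset F hn
  ⟨hpos n hnF, (card_E1 ⟨n, hnF⟩).trans_le ((min_le_left _ _).trans (F.min'_le n hnF))⟩

lemma subset_E1 {F G : Finset ℕ} (hGF : G ⊆ F) (hG : IsSchreier G) (hlt : FinsetLT G (F \ G)) :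
    G ⊆ E1 F := by
  intro x hxG
  by_contra hxE
  have hxF := hGF hxG
  have hF : F.Nonempty := ⟨x, hxF⟩
  have hmin : F.min' hF ∈ G := by
    by_contra hmin
    exact (hlt x hxG _ (mem_sdiff.mpr ⟨F.min'_mem hF, hmin⟩)).not_ge (F.min'_le x hxF)
  have hEG : E1 F ⊆ G := fun z hzE => by
    by_contra hzG
    exact (hlt x hxG z (mem_sdiff.mpr ⟨E1_subset F hzE, hzG⟩)).asymm
      (finsetLT_E1_sdiff F z hzE x (mem_sdiff.mpr ⟨hxF, hxE⟩))
  -- `|E₁(F)| < |G| ≤ min F` forces `E₁(F) = F`, which contains `x`.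
  have hcard : #(E1 F) < #G := card_lt_card ⟨hEG, fun h => hxE (h hxG)⟩
  have hGmin := (hG _ hmin).2
  rw [card_E1 hF] at hcard
  have hEF : E1 F = F := eq_of_subset_of_card_le (E1_subset F) (by rw [card_E1 hF]; omega)
  exact hxE (by rwa [hEF])

lemma E1_eq_empty_iff {F : Finset ℕ} (hpos : ∀ n ∈ F, 0 < n) : E1 F = ∅ ↔ F = ∅ := by
  refine ⟨fun h => ?_, fun h => by subst h; exact subset_empty.mp (E1_subset ∅)⟩
  by_contra hF
  have hF := nonempty_iff_ne_empty.mpr hF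
  have hcard := card_E1 hF
  rw [h, card_empty] at hcard
  have := hpos _ (F.min'_mem hF)
  have := hF.card_pos
  omega

lemma Eacc_succ' (i : ℕ) (F : Finset ℕ) : Eacc (i + 1) F = E1 F ∪ Eacc i (F \ E1 F) := by
  induction i with
  | zero => simp [Eacc]
  | succ i ih =>
    rw [Eacc, ih, Eacc, sdiff_sdiff, sup_eq_union, union_assoc]

lemma sdiff_Eacc_succ (i : ℕ) (F : Finset ℕ) :
    F \ Eacc (i + 1) F = (F \ E1 F) \ Eacc i (F \ E1 F) := by
  rw [Eacc_succ', sdiff_sdiff, sup_eq_union]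

lemma combine_isSchreier_succ_iff {F : Finset ℕ} (hpos : ∀ n ∈ F, 0 < n) {k : ℕ} :
    Combine IsSchreier (k + 1) F ↔ Combine IsSchreier k (F \ E1 F) := by
  rw [combine_succ_iff (fun n hn => absurd hn (notMem_empty n))]
  constructor
  · rintro ⟨G, hGF, hG, hlt, hC⟩
    exact hC.subset isSchreier_antitone (sdiff_subset_sdiff le_rfl (subset_E1 hGF hG hlt))
  · exact fun hC => ⟨E1 F, E1_subset F, isSchreier_E1 hpos, finsetLT_E1_sdiff F, hC⟩

lemma combine_isSchreier_iff_sdiff_Eacc_eq_empty (k : ℕ) {F : Finset ℕ} (hpos : ∀ n ∈ F, 0 < n) :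
    Combine IsSchreier k F ↔ F \ Eacc k F = ∅ := by
  induction k generalizing F with
  | zero => rw [combine_zero_iff, Eacc, sdiff_empty]
  | succ k ih =>
    rw [combine_isSchreier_succ_iff hpos, ih fun n hn => hpos n (mem_sdiff.mp hn).1,
      sdiff_Eacc_succ]

theorem stmt11 (F : Finset ℕ) (hpos : ∀ n ∈ F, 0 < n) (k : ℕ) :
    Combine IsSchreier k F ↔ Epiece (k + 1) F = ∅ := by
  rw [Epiece, Nat.add_sub_cancel, E1_eq_empty_iff fun n hn => hpos n (mem_sdiff.mp hn).1,
    combine_isSchreier_iff_sdiff_Eacc_eq_empty k hpos]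
end

section
/- Let a, b ∈ ℕ with [a,b] ∉ 2S₁. If F ∈ full_{a,b}(2S₁), then E₁(F) is a full Schreier set and min E₂(F) ≤ b/2 + 2. -/
open Finset

/-! The first greedy piece `A = E₁(F)` consists of the `a = min F` smallest elements of `F`, and
`a < |F|` since otherwise adding any missing point of `[a, b]` would keep `F` in `2S₁`; so `A` is
a full Schreier set. The rest `R = F \ A` lies inside the second set of any `2S₁`-decomposition
of `F`, hence is Schreier and equals `E₂(F)`. Let `m = min R`; as `R ⊆ [m, b]`, `|R| + m ≤ b + 1`.
If `m > |R|`, maximality of `F` yields, for every missing `n ∈ [a, b]`, that `n ≤ |R|` and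
`max A ≤ |R|`: otherwise `A ∪ (R ∪ {n})`, or `(A \ {max A} ∪ {n}) ∪ (R ∪ {max A})`, would be a
`2S₁`-decomposition. Hence `(|R|, b] ⊆ R`, so `b ≤ 2|R|` and `2m ≤ b + 2`. -/

def takeSmall (k : ℕ) (S : Finset ℕ) : Finset ℕ := ((S.sort (· ≤ ·)).take k).toFinset

lemma takeSmall_subset (k : ℕ) (S : Finset ℕ) : takeSmall k S ⊆ S := fun _ hx =>
  (mem_sort _).mp (List.mem_of_mem_take (List.mem_toFinset.mp hx))

lemma card_takeSmall (k : ℕ) (S : Finset ℕ) : (takeSmall k S).card = min k S.card := by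
  rw [takeSmall, List.toFinset_card_of_nodup ((S.sort_nodup _).sublist (List.take_sublist _ _)),
    List.length_take, length_sort]

lemma finsetLT_takeSmall_sdiff (k : ℕ) (S : Finset ℕ) :
    FinsetLT (takeSmall k S) (S \ takeSmall k S) := by
  intro x hx y hy
  obtain ⟨hyS, hyT⟩ := mem_sdiff.mp hy
  rw [takeSmall, List.mem_toFinset] at hx hyT
  have hy' : y ∈ (S.sort (· ≤ ·)).drop k := by
    have : y ∈ S.sort (· ≤ ·) := (mem_sort _).mpr hyS
    rw [← List.take_append_drop k (S.sort (· ≤ ·)), List.mem_append] at this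
    exact this.resolve_left hyT
  have hsorted :
      ((S.sort (· ≤ ·)).take k ++ (S.sort (· ≤ ·)).drop k).Pairwise (· < ·) := by
    rw [List.take_append_drop]; exact (sortedLT_sort S).pairwise
  exact (List.pairwise_append.mp hsorted).2.2 x hx y hy'

lemma min'_mem_takeSmall {k : ℕ} (hk : 0 < k) {S : Finset ℕ} (hS : S.Nonempty) :
    S.min' hS ∈ takeSmall k S := by
  obtain ⟨x, hx⟩ : (takeSmall k S).Nonempty := by
    rw [← card_pos, card_takeSmall]; exact lt_min hk (card_pos.mpr hS)
  by_contra hmin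
  exact (finsetLT_takeSmall_sdiff k S x hx _ (mem_sdiff.mpr ⟨S.min'_mem hS, hmin⟩)).not_ge
    (S.min'_le x (takeSmall_subset k S hx))

lemma E1_eq_takeSmall {S : Finset ℕ} (hS : S.Nonempty) : E1 S = takeSmall (S.min' hS) S := by
  simp [E1, takeSmall, hS]

lemma Epiece_one (F : Finset ℕ) : Epiece 1 F = E1 F := by
  simp [Epiece, Eacc]

lemma Epiece_two (F : Finset ℕ) : Epiece 2 F = E1 (F \ E1 F) := by
  simp [Epiece, Eacc]

lemma IsSchreier.mono {G H : Finset ℕ} (hG : IsSchreier G) (hHG : H ⊆ G) : IsSchreier H :=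
  fun n hn => ⟨(hG n (hHG hn)).1, (card_le_card hHG).trans (hG n (hHG hn)).2⟩

lemma isSchreier_of_card_le_of_forall_le {S : Finset ℕ} {c : ℕ} (hc : S.card ≤ c)
    (hS : ∀ x ∈ S, c ≤ x) : IsSchreier S := fun x hx =>
  ⟨(card_pos.mpr ⟨x, hx⟩).trans_le (hc.trans (hS x hx)), hc.trans (hS x hx)⟩

lemma isSchreier_takeSmall {k : ℕ} {S : Finset ℕ} (hS : ∀ x ∈ S, k ≤ x) :
    IsSchreier (takeSmall k S) :=
  isSchreier_of_card_le_of_forall_le (by rw [card_takeSmall]; exact min_le_left _ _)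
    fun x hx => hS x (takeSmall_subset k S hx)

lemma E1_eq_self_of_isSchreier {S : Finset ℕ} (hS : IsSchreier S) : E1 S = S := by
  rcases S.eq_empty_or_nonempty with rfl | hne
  · simp [E1]
  rw [E1_eq_takeSmall hne, takeSmall, List.take_of_length_le, sort_toFinset]
  rw [length_sort]; exact (hS _ (S.min'_mem hne)).2

lemma isFull_isSchreier_of_card_eq {S : Finset ℕ} {k : ℕ} (hk : k ∈ S)
    (hS : ∀ x ∈ S, k ≤ x) (hcard : S.card = k) : IsFull IsSchreier S := by
  refine ⟨isSchreier_of_card_le_of_forall_le hcard.le hS, fun n _ hn hins => ?_⟩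
  have := (hins k (mem_insert_of_mem hk)).2
  rw [card_insert_of_notMem hn, hcard] at this
  omega

lemma combine_two_iff {P : Finset ℕ → Prop} (hP : P ∅) {F : Finset ℕ} :
    Combine P 2 F ↔ ∃ G H, P G ∧ P H ∧ FinsetLT G H ∧ G ∪ H = F := by
  constructor
  · rintro ⟨L, hlen, hpair, hall, rfl⟩
    match L, hlen with
    | [], _ => exact ⟨∅, ∅, hP, hP, by simp [FinsetLT], by simp⟩
    | [G], _ => exact ⟨G, ∅, hall G (by simp), hP, by simp [FinsetLT], by simp⟩
    | [G, H], _ =>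
      exact ⟨G, H, hall G (by simp), hall H (by simp), (List.pairwise_pair.mp hpair), by simp⟩
  · rintro ⟨G, H, hG, hH, hGH, rfl⟩
    refine ⟨[G, H], by simp, List.pairwise_pair.mpr hGH, ?_, by simp⟩
    simp only [List.mem_cons, List.not_mem_nil, or_false, forall_eq_or_imp, forall_eq]
    exact ⟨hG, hH⟩

lemma combine_isSchreier_two_iff {F : Finset ℕ} :
    Combine IsSchreier 2 F ↔
      ∃ G H, IsSchreier G ∧ IsSchreier H ∧ FinsetLT G H ∧ G ∪ H = F :=
  combine_two_iff (by simp [IsSchreier])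

lemma pos_of_mem_of_combine_isSchreier_two {F : Finset ℕ} (hF : Combine IsSchreier 2 F) {x : ℕ}
    (hx : x ∈ F) : 0 < x := by
  obtain ⟨G, H, hG, hH, -, rfl⟩ := combine_isSchreier_two_iff.mp hF
  rcases mem_union.mp hx with hx | hx
  exacts [(hG x hx).1, (hH x hx).1]

/-- Split off the `a` smallest elements; at most one element is left. -/
lemma combine_isSchreier_two_of_card_le_succ {a : ℕ} (ha : 0 < a) {S : Finset ℕ}
    (hS : ∀ x ∈ S, a ≤ x) (hcard : S.card ≤ a + 1) : Combine IsSchreier 2 S := by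
  refine combine_isSchreier_two_iff.mpr ⟨_, _, isSchreier_takeSmall hS, ?_,
    finsetLT_takeSmall_sdiff a S, union_sdiff_of_subset (takeSmall_subset a S)⟩
  refine isSchreier_of_card_le_of_forall_le (c := 1) ?_ fun x hx =>
    ha.trans_le (hS x (sdiff_subset hx))
  rw [card_sdiff_of_subset (takeSmall_subset a S), card_takeSmall]
  omega

lemma sdiff_takeSmall_subset {G H : Finset ℕ} (hG : IsSchreier G) (hGH : FinsetLT G H)
    (hne : (G ∪ H).Nonempty) :
    (G ∪ H) \ takeSmall ((G ∪ H).min' hne) (G ∪ H) ⊆ H := by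
  set a := (G ∪ H).min' hne
  set T := takeSmall a (G ∪ H)
  intro y hy
  obtain ⟨hyF, hyT⟩ := mem_sdiff.mp hy
  refine (mem_union.mp hyF).resolve_left fun hyG => ?_
  have hlow : ∀ x ∈ G ∪ H, x ≤ y → x ∈ G := fun x hx hxy =>
    (mem_union.mp hx).resolve_right fun hxH => (hGH y hyG x hxH).not_ge hxy
  have haG : a ∈ G := hlow a (min'_mem _ hne) (min'_le _ y hyF)
  have hTG : insert y T ⊆ G := insert_subset hyG fun x hx =>
    hlow x (takeSmall_subset _ _ hx) (finsetLT_takeSmall_sdiff _ _ x hx y hy).le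
  have hcard := (card_le_card hTG).trans (hG a haG).2
  rw [card_insert_of_notMem hyT, card_takeSmall] at hcard
  have hTF : T = G ∪ H :=
    eq_of_subset_of_card_le (takeSmall_subset _ _) (by rw [card_takeSmall]; omega)
  exact hyT (hTF ▸ hyF)

lemma isSchreier_sdiff_E1 {F : Finset ℕ} (hF : Combine IsSchreier 2 F) :
    IsSchreier (F \ E1 F) := by
  obtain ⟨G, H, hG, hH, hGH, rfl⟩ := combine_isSchreier_two_iff.mp hF
  rcases (G ∪ H).eq_empty_or_nonempty with hempty | hne
  · simp [hempty, IsSchreier]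
  rw [E1_eq_takeSmall hne]
  exact hH.mono (sdiff_takeSmall_subset hG hGH hne)

section Exchange

variable {A R : Finset ℕ} {n : ℕ}

lemma combine_isSchreier_two_insert_of_lt (hA : IsSchreier A) (hAR : FinsetLT A R)
    (hR : ∀ x ∈ R, R.card < x) (hAn : ∀ x ∈ A, x < n) (hRn : R.card < n) :
    Combine IsSchreier 2 (insert n (A ∪ R)) := by
  refine combine_isSchreier_two_iff.mpr ⟨A, insert n R, hA, ?_, ?_, by simp [union_insert]⟩
  · refine isSchreier_of_card_le_of_forall_le (card_insert_le n R) fun x hx => ?_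
    rcases mem_insert.mp hx with rfl | hx
    exacts [hRn, hR x hx]
  · intro x hx y hy
    rcases mem_insert.mp hy with rfl | hy
    exacts [hAn x hx, hAR x hx y hy]

lemma combine_isSchreier_two_insert_of_lt_max (hA : IsSchreier A) (hAR : FinsetLT A R)
    (hR : ∀ x ∈ R, R.card < x) (hne : A.Nonempty) (hnt : n < A.max' hne) (hAn : A.card ≤ n)
    (htR : R.card < A.max' hne) :
    Combine IsSchreier 2 (insert n (A ∪ R)) := by
  set t := A.max' hne
  have ht : t ∈ A := A.max'_mem hne
  refine combine_isSchreier_two_iff.mpr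
    ⟨insert n (A.erase t), insert t R, ?_, ?_, ?_, ?_⟩
  · refine isSchreier_of_card_le_of_forall_le (c := A.card) ?_ fun x hx => ?_
    · have := card_insert_le n (A.erase t)
      rw [card_erase_of_mem ht] at this
      have := card_pos.mpr hne
      omega
    · rcases mem_insert.mp hx with rfl | hx
      exacts [hAn, (hA x (mem_of_mem_erase hx)).2]
  · refine isSchreier_of_card_le_of_forall_le (card_insert_le t R) fun x hx => ?_
    rcases mem_insert.mp hx with rfl | hx
    exacts [htR, hR x hx]
  · have hlt : ∀ x ∈ insert n (A.erase t), x < t := by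
      intro x hx
      rcases mem_insert.mp hx with rfl | hx
      · exact hnt
      · exact lt_of_le_of_ne (A.le_max' x (mem_of_mem_erase hx)) (ne_of_mem_erase hx)
    intro x hx y hy
    rcases mem_insert.mp hy with rfl | hy
    exacts [hlt x hx, (hlt x hx).trans (hAR t ht y hy)]
  · rw [insert_union, union_insert, ← insert_union, insert_erase ht]

lemma max'_le_card_of_not_combine (hA : IsSchreier A) (hAR : FinsetLT A R)
    (hR : ∀ x ∈ R, R.card < x) (hne : A.Nonempty) (hAn : A.card ≤ n) (hnA : n ∉ A)
    (hn : ¬ Combine IsSchreier 2 (insert n (A ∪ R))) :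
    n ≤ R.card ∧ A.max' hne ≤ R.card := by
  rcases lt_trichotomy n (A.max' hne) with hnt | hnt | htn
  · suffices htR : A.max' hne ≤ R.card from ⟨hnt.le.trans htR, htR⟩
    by_contra! htR
    exact hn (combine_isSchreier_two_insert_of_lt_max hA hAR hR hne hnt hAn htR)
  · exact absurd (hnt ▸ A.max'_mem hne) hnA
  · have hnR : n ≤ R.card := by
      by_contra! hRn
      exact hn (combine_isSchreier_two_insert_of_lt hA hAR hR
        (fun x hx => (A.le_max' x hx).trans_lt htn) hRn)
    exact ⟨hnR, htn.le.trans hnR⟩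

end Exchange

section FullAB

variable {a b : ℕ} {F : Finset ℕ}

lemma exists_notMem_of_fullAB {P : Finset ℕ → Prop} (hab : ¬ P (Icc a b))
    (hF : FullAB P a b F) : ∃ n ∈ Icc a b, n ∉ F := by
  by_contra! h
  exact hab (Subset.antisymm h hF.2.1 ▸ hF.1)

lemma lt_card_of_fullAB (hab : ¬ Combine IsSchreier 2 (Icc a b))
    (hF : FullAB (Combine IsSchreier 2) a b F) : a < F.card := by
  obtain ⟨n, hn, hnF⟩ := exists_notMem_of_fullAB hab hF
  obtain ⟨hF2, hFab, haF, hmax⟩ := hF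
  by_contra! hcard
  refine hmax n hn hnF (combine_isSchreier_two_of_card_le_succ
    (pos_of_mem_of_combine_isSchreier_two hF2 haF) (fun x hx => ?_) ?_)
  · rcases mem_insert.mp hx with rfl | hx
    exacts [(mem_Icc.mp hn).1, (mem_Icc.mp (hFab hx)).1]
  · exact (card_insert_le n F).trans (by omega)

lemma two_mul_min'_sdiff_takeSmall_le (hab : ¬ Combine IsSchreier 2 (Icc a b))
    (hF : FullAB (Combine IsSchreier 2) a b F) (ha : 0 < a)
    (hRne : (F \ takeSmall a F).Nonempty) :
    2 * (F \ takeSmall a F).min' hRne ≤ b + 2 := by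
  obtain ⟨n₀, hn₀, hn₀F⟩ := exists_notMem_of_fullAB hab hF
  obtain ⟨-, hFab, haF, hmax⟩ := hF
  set A := takeSmall a F
  set R := F \ A
  set m := R.min' hRne
  have hFab' : ∀ x ∈ F, a ≤ x ∧ x ≤ b := fun x hx => mem_Icc.mp (hFab hx)
  have hRm : R.card + m ≤ b + 1 := by
    have hRsub : R ⊆ Icc m b := fun x hx =>
      mem_Icc.mpr ⟨R.min'_le x hx, (hFab' x (sdiff_subset hx)).2⟩
    have hmb : m ≤ b := (hFab' m (sdiff_subset (R.min'_mem hRne))).2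
    have := card_le_card hRsub
    rw [Nat.card_Icc] at this
    omega
  by_cases hmR : m ≤ R.card
  · omega
  have hR : ∀ x ∈ R, R.card < x := fun x hx => (not_le.mp hmR).trans_le (R.min'_le x hx)
  have hAF : A ⊆ F := takeSmall_subset a F
  have hAa : A.card ≤ a := by rw [card_takeSmall]; exact min_le_left _ _
  have hAne : A.Nonempty := ⟨_, min'_mem_takeSmall ha ⟨a, haF⟩⟩
  have hAR : A ∪ R = F := union_sdiff_of_subset hAF
  set t := A.max' hAne
  have hmissing : ∀ n ∈ Icc a b, n ∉ F → n ≤ R.card ∧ t ≤ R.card := fun n hn hnF =>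
    max'_le_card_of_not_combine (isSchreier_takeSmall fun x hx => (hFab' x hx).1)
      (finsetLT_takeSmall_sdiff a F) hR hAne (hAa.trans (mem_Icc.mp hn).1)
      (fun hnA => hnF (hAF hnA)) (by rw [hAR]; exact hmax n hn hnF)
  have htR : t ≤ R.card := (hmissing n₀ hn₀ hn₀F).2
  have hat : a ≤ t := (hFab' t (hAF (A.max'_mem hAne))).1
  have htop : Icc (R.card + 1) b ⊆ R := by
    intro y hy
    obtain ⟨hy₁, hy₂⟩ := mem_Icc.mp hy
    have hyF : y ∈ F := by
      by_contra hyF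
      have := (hmissing y (mem_Icc.mpr ⟨by omega, hy₂⟩) hyF).1
      omega
    refine mem_sdiff.mpr ⟨hyF, fun hyA => ?_⟩
    have : y ≤ t := A.le_max' y hyA
    omega
  have := card_le_card htop
  simp only [Nat.card_Icc] at this
  omega

end FullAB

theorem stmt17 (a b : ℕ) (hab : ¬ Combine IsSchreier 2 (Finset.Icc a b))
    (F : Finset ℕ) (hF : FullAB (Combine IsSchreier 2) a b F) :
    IsFull IsSchreier (Epiece 1 F) ∧
    ∃ h : (Epiece 2 F).Nonempty,
      (((Epiece 2 F).min' h : ℚ)) ≤ (b : ℚ) / 2 + 2 := by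
  have haF : a ∈ F := hF.2.2.1
  have hFa : ∀ x ∈ F, a ≤ x := fun x hx => (mem_Icc.mp (hF.2.1 hx)).1
  have ha : 0 < a := pos_of_mem_of_combine_isSchreier_two hF.1 haF
  have hcard : a < F.card := lt_card_of_fullAB hab hF
  have hmin : F.min' ⟨a, haF⟩ = a := le_antisymm (F.min'_le a haF) (F.le_min' _ a hFa)
  have hE1 : E1 F = takeSmall a F := by rw [E1_eq_takeSmall ⟨a, haF⟩, hmin]
  have hAcard : (takeSmall a F).card = a := by rw [card_takeSmall]; omega
  have hRne : (F \ takeSmall a F).Nonempty := by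
    rw [← card_pos, card_sdiff_of_subset (takeSmall_subset a F)]; omega
  have haA : a ∈ takeSmall a F := by
    have := min'_mem_takeSmall ha ⟨a, haF⟩
    rwa [hmin] at this
  rw [Epiece_one, Epiece_two, E1_eq_self_of_isSchreier (isSchreier_sdiff_E1 hF.1), hE1]
  refine ⟨isFull_isSchreier_of_card_eq haA (fun x hx => hFa x (takeSmall_subset a F hx)) hAcard,
    hRne, ?_⟩
  have hbound : ((2 * (F \ takeSmall a F).min' hRne : ℕ) : ℚ) ≤ b + 2 := by
    exact_mod_cast two_mul_min'_sdiff_takeSmall_le hab hF ha hRne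
  push_cast at hbound
  linarith
end
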